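/- Let φ : ℝ → ℝ be convex, let θ₀ ∈ [0,1], and let θ₁,…,θ_N ∈ [0,1] with ∑_{k=1}^N θ_k = 1. Then for any v, w ∈ ℝ: φ(v + θ₀·w) + ∑_{k=1}^N φ(v + (1-θ₀)·θ_k·w) ≤ φ(v + w) + N·φ(v). -/
import Mathlib

lemma seg_ineq (φ : ℝ → ℝ) (hφ : ConvexOn ℝ Set.univ φ) (v w t : ℝ)
    (h0 : 0 ≤ t) (h1 : t ≤ 1) :
    φ (v + t * w) ≤ (1 - t) * φ v + t * φ (v + w) := by
  have := hφ.2 (Set.mem_univ v) (Set.mem_univ (v + w))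
    (by linarith : (0:ℝ) ≤ 1 - t) h0 (by ring)
  simpa [smul_eq_mul] using (by
    have h : (1 - t) * v + t * (v + w) = v + t * w := by ring
    simpa [smul_eq_mul, h] using this)

theorem two_level_convex_partition (φ : ℝ → ℝ) (hφ : ConvexOn ℝ Set.univ φ)
    (N : ℕ) (θ₀ : ℝ) (hθ₀0 : 0 ≤ θ₀) (hθ₀1 : θ₀ ≤ 1)
    (θ : Fin N → ℝ) (hθ0 : ∀ k, 0 ≤ θ k) (hθ1 : ∀ k, θ k ≤ 1)
    (hsum : ∑ k, θ k = 1) (v w : ℝ) :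
    φ (v + θ₀ * w) + ∑ k, φ (v + (1 - θ₀) * θ k * w) ≤
      φ (v + w) + (N : ℝ) * φ v := by
  have h0 : φ (v + θ₀ * w) ≤ (1 - θ₀) * φ v + θ₀ * φ (v + w) :=
    seg_ineq φ hφ v w θ₀ hθ₀0 hθ₀1
  have hk : ∀ k, φ (v + (1 - θ₀) * θ k * w) ≤
      (1 - (1 - θ₀) * θ k) * φ v + ((1 - θ₀) * θ k) * φ (v + w) := by
    intro k
    apply seg_ineq φ hφ v w _ (mul_nonneg (by linarith) (hθ0 k))
    nlinarith [hθ0 k, hθ1 k]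
  have hs : ∑ k, φ (v + (1 - θ₀) * θ k * w) ≤
      ∑ k, ((1 - (1 - θ₀) * θ k) * φ v + ((1 - θ₀) * θ k) * φ (v + w)) :=
    Finset.sum_le_sum fun k _ => hk k
  have hsum' : ∑ k, ((1 - (1 - θ₀) * θ k) * φ v + ((1 - θ₀) * θ k) * φ (v + w))
      = ((N : ℝ) - (1 - θ₀)) * φ v + (1 - θ₀) * φ (v + w) := by
    rw [Finset.sum_add_distrib, ← Finset.sum_mul, ← Finset.sum_mul]
    have : ∑ k, (1 - θ₀) * θ k = 1 - θ₀ := by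
      rw [← Finset.mul_sum, hsum, mul_one]
    rw [this]
    have : ∑ k : Fin N, (1 - (1 - θ₀) * θ k) = (N : ℝ) - (1 - θ₀) := by
      rw [Finset.sum_sub_distrib, ← Finset.mul_sum, hsum]
      simp
    rw [this]
  linarith [hs, hsum'.le, h0]
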